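/- For a max-plus IFS with weights q_j not depending on x, if z ∈ Ω (the Aubry set) then S(z, y) = 0 for every y ∈ X. -/

import Mathlib

open Filter Topology

/-- Apply the maps of a word: `applyWord φ [j₁,…,jₙ] x = φ_{j₁}(⋯(φ_{jₙ}(x)))`. -/
def applyWord {J X : Type*} (φ : J → X → X) : List J → X → X
  | [], x => x
  | j :: w, x => φ j (applyWord φ w x)

/-- Birkhoff-like sum of weights along a word:
`Sum((j₁,…,jₙ),x) = q_{j₁}(φ_{j₂}∘⋯∘φ_{jₙ}(x)) + ⋯ + q_{jₙ}(x)`. -/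
def sumWord {J X : Type*} (φ : J → X → X) (q : J → X → ℝ) : List J → X → ℝ
  | [], _ => 0
  | j :: w, x => q j (applyWord φ w x) + sumWord φ q w x

/-- `S_ε(x,y)`: the sup of `Sum(ω,y)` over nonempty words ω with `d(x,φ_ω(y)) < ε`. -/
noncomputable def Seps {J X : Type*} [MetricSpace X] (φ : J → X → X) (q : J → X → ℝ)
    (ε : ℝ) (x y : X) : EReal :=
  ⨆ (ω : List J) (_ : ω ≠ [] ∧ dist x (applyWord φ ω y) < ε),
    ((sumWord φ q ω y : ℝ) : EReal)

/-- The Mañé potential `S(x,y) = lim_{ε→0} S_ε(x,y) = inf_{ε>0} S_ε(x,y)`. -/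
noncomputable def manePot {J X : Type*} [MetricSpace X] (φ : J → X → X) (q : J → X → ℝ)
    (x y : X) : EReal :=
  ⨅ (ε : ℝ) (_ : 0 < ε), Seps φ q ε x y

lemma applyWord_append {J X : Type*} (φ : J → X → X) (a b : List J) (x : X) :
    applyWord φ (a ++ b) x = applyWord φ a (applyWord φ b x) := by
  induction a with
  | nil => rfl
  | cons j t ih => simp [applyWord, ih]

lemma sumWord_const {J X : Type*} (φ : J → X → X) (q : J → ℝ) (ω : List J) (x : X) :
    sumWord φ (fun j _ => q j) ω x = (ω.map q).sum := by
  induction ω with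
  | nil => rfl
  | cons j t ih => simp [sumWord, ih]

lemma dist_applyWord_le {J X : Type*} [MetricSpace J] [MetricSpace X]
    {γ : ℝ} (hγ0 : 0 ≤ γ) (φ : J → X → X)
    (hφ : ∀ j₁ j₂ x₁ x₂, dist (φ j₁ x₁) (φ j₂ x₂) ≤ γ * (dist j₁ j₂ + dist x₁ x₂))
    (ω : List J) (x y : X) :
    dist (applyWord φ ω x) (applyWord φ ω y) ≤ γ ^ ω.length * dist x y := by
  induction ω with
  | nil => simp [applyWord]
  | cons j t ih =>
      have h := hφ j j (applyWord φ t x) (applyWord φ t y)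
      simp only [dist_self, zero_add] at h
      calc dist (applyWord φ (j :: t) x) (applyWord φ (j :: t) y)
          ≤ γ * dist (applyWord φ t x) (applyWord φ t y) := h
        _ ≤ γ * (γ ^ t.length * dist x y) := by nlinarith
        _ = γ ^ (j :: t).length * dist x y := by
            rw [List.length_cons, pow_succ]; ring

/-- n-fold concatenation of a word. -/
def wrep {J : Type*} (ω : List J) : ℕ → List J
  | 0 => []
  | n + 1 => ω ++ wrep ω n

lemma wrep_length {J : Type*} (ω : List J) (n : ℕ) :
    (wrep ω n).length = n * ω.length := by
  induction n with
  | zero => simp [wrep]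
  | succ n ih => simp [wrep, ih]; ring

lemma wrep_map_sum {J : Type*} (q : J → ℝ) (ω : List J) (n : ℕ) :
    ((wrep ω n).map q).sum = n * (ω.map q).sum := by
  induction n with
  | zero => simp [wrep]
  | succ n ih => simp [wrep, ih]; ring

lemma dist_wrep_le {J X : Type*} [MetricSpace J] [MetricSpace X]
    {γ : ℝ} (hγ0 : 0 ≤ γ) (hγ1 : γ < 1) (φ : J → X → X)
    (hφ : ∀ j₁ j₂ x₁ x₂, dist (φ j₁ x₁) (φ j₂ x₂) ≤ γ * (dist j₁ j₂ + dist x₁ x₂))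
    (ω : List J) (hω : ω ≠ []) (z : X) (n : ℕ) :
    dist z (applyWord φ (wrep ω n) z) ≤ dist z (applyWord φ ω z) / (1 - γ) := by
  have h1γ : 0 < 1 - γ := by linarith
  set c := dist z (applyWord φ ω z) with hc
  have hc0 : 0 ≤ c := dist_nonneg
  induction n with
  | zero => simp [wrep, applyWord]; positivity
  | succ n ih =>
      have hlen : 1 ≤ ω.length := by
        cases ω with
        | nil => exact absurd rfl hω
        | cons a b => simp
      have hγpow : γ ^ ω.length ≤ γ := by
        calc γ ^ ω.length ≤ γ ^ 1 := pow_le_pow_of_le_one hγ0 hγ1.le hlen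
          _ = γ := pow_one γ
      calc dist z (applyWord φ (wrep ω (n + 1)) z)
          ≤ dist z (applyWord φ ω z) +
            dist (applyWord φ ω z) (applyWord φ (wrep ω (n+1)) z) := dist_triangle _ _ _
        _ = c + dist (applyWord φ ω z) (applyWord φ ω (applyWord φ (wrep ω n) z)) := by
            rw [wrep, applyWord_append]
        _ ≤ c + γ ^ ω.length * dist z (applyWord φ (wrep ω n) z) := by
            have := dist_applyWord_le hγ0 φ hφ ω z (applyWord φ (wrep ω n) z)
            linarith
        _ ≤ c + γ * (c / (1 - γ)) := by
            have hd : (0:ℝ) ≤ dist z (applyWord φ (wrep ω n) z) := dist_nonneg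
            nlinarith
        _ ≤ c / (1 - γ) := le_of_eq (by field_simp; ring)

lemma ereal_nonneg_of_forall {a : EReal}
    (h : ∀ δ : ℝ, 0 < δ → ((-δ : ℝ) : EReal) ≤ a) : 0 ≤ a := by
  by_contra hc
  push_neg at hc
  obtain ⟨b, hab, hb0⟩ := exists_between hc
  have hbot : b ≠ ⊥ := fun hb => by
    rw [hb] at hab; exact (not_lt_bot hab)
  have htop : b ≠ ⊤ := (hb0.trans_le le_top).ne
  lift b to ℝ using ⟨htop, hbot⟩
  have hb0' : b < 0 := by exact_mod_cast hb0
  have h2 := h (-b) (by linarith)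
  rw [neg_neg] at h2
  exact absurd (lt_of_lt_of_le hab h2) (lt_irrefl _)

/-- For a max-plus IFS with place-independent weights, S(z,y) = 0 for every point z of
the Aubry set and every y ∈ X. -/
theorem manePot_zero_from_aubry {J X : Type*} [MetricSpace J] [MetricSpace X]
    [CompactSpace J] [CompactSpace X] [Nonempty J] [Nonempty X]
    {γ : ℝ} (hγ0 : 0 < γ) (hγ1 : γ < 1)
    (φ : J → X → X)
    (hφ : ∀ j₁ j₂ x₁ x₂, dist (φ j₁ x₁) (φ j₂ x₂) ≤ γ * (dist j₁ j₂ + dist x₁ x₂))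
    (q : J → ℝ) (hqc : Continuous q) (hqn : (⨆ j : J, q j) = 0) :
    ∀ z : X, manePot φ (fun j _ => q j) z z = 0 →
      ∀ y : X, manePot φ (fun j _ => q j) z y = 0 := by
  intro z hz y
  have h1γ : (0:ℝ) < 1 - γ := by linarith
  have hbdd : BddAbove (Set.range q) := (isCompact_range hqc).bddAbove
  have qle : ∀ j, q j ≤ 0 := fun j => hqn ▸ le_ciSup hbdd j
  have sumle : ∀ ω : List J, (ω.map q).sum ≤ 0 := by
    intro ω
    induction ω with
    | nil => simp
    | cons j t ih => have := qle j; simp only [List.map_cons, List.sum_cons]; linarith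
  have upper : manePot φ (fun j _ => q j) z y ≤ 0 := by
    refine le_trans (iInf₂_le 1 one_pos) (iSup₂_le fun ω _ => ?_)
    rw [sumWord_const]
    exact_mod_cast sumle ω
  have lower : (0:EReal) ≤ manePot φ (fun j _ => q j) z y := by
    refine le_iInf₂ fun ε hε => ?_
    refine ereal_nonneg_of_forall fun δ hδ => ?_
    -- choose n with γ^n * dist z y < ε/2
    obtain ⟨n, hn⟩ : ∃ n : ℕ, γ ^ n * dist z y < ε / 2 := by
      have h := tendsto_pow_atTop_nhds_zero_of_lt_one hγ0.le hγ1
      have h2 := h.mul_const (dist z y)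
      rw [zero_mul] at h2
      have h3 := h2.eventually (eventually_lt_nhds (show (0:ℝ) < ε/2 by linarith)) |>.exists
      exact h3
    set m : ℕ := n + 1 with hm
    have hmpos : (0:ℝ) < (m:ℝ) := by positivity
    set ε' : ℝ := ε * (1 - γ) / 2 with hε'def
    have hε' : 0 < ε' := by positivity
    have hS : (0:EReal) ≤ Seps φ (fun j _ => q j) ε' z z := by
      rw [← hz]; exact iInf₂_le ε' hε'
    have hlt : ((-(δ / m) : ℝ) : EReal) < Seps φ (fun j _ => q j) ε' z z := by
      refine lt_of_lt_of_le ?_ hS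
      have hneg : (-(δ / (m:ℝ)) : ℝ) < 0 := neg_lt_zero.mpr (by positivity)
      exact_mod_cast hneg
    unfold Seps at hlt
    obtain ⟨ω, hω⟩ := lt_iSup_iff.mp hlt
    obtain ⟨⟨hne, hdist⟩, hval⟩ := lt_iSup_iff.mp hω
    rw [sumWord_const] at hval
    have hσ : -(δ / (m:ℝ)) < (ω.map q).sum := by exact_mod_cast hval
    have hlen : 1 ≤ ω.length := by
      cases ω with
      | nil => exact absurd rfl hne
      | cons a b => simp
    -- the repeated word
    have hne' : wrep ω m ≠ [] := by
      rw [hm]; show ω ++ wrep ω n ≠ []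
      simp [hne]
    have hdz : dist z (applyWord φ (wrep ω m) z) < ε / 2 := by
      calc dist z (applyWord φ (wrep ω m) z)
          ≤ dist z (applyWord φ ω z) / (1 - γ) :=
            dist_wrep_le hγ0.le hγ1 φ hφ ω hne z m
        _ < ε' / (1 - γ) := by gcongr
        _ = ε / 2 := by rw [hε'def]; field_simp
    have hcontr : dist (applyWord φ (wrep ω m) z) (applyWord φ (wrep ω m) y) < ε / 2 := by
      have h1 := dist_applyWord_le hγ0.le φ hφ (wrep ω m) z y
      have hlw : n ≤ (wrep ω m).length := by
        rw [wrep_length]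
        calc n ≤ m := by omega
          _ = m * 1 := (mul_one m).symm
          _ ≤ m * ω.length := Nat.mul_le_mul_left m hlen
      have hpow : γ ^ (wrep ω m).length ≤ γ ^ n := pow_le_pow_of_le_one hγ0.le hγ1.le hlw
      have hd0 : (0:ℝ) ≤ dist z y := dist_nonneg
      calc dist (applyWord φ (wrep ω m) z) (applyWord φ (wrep ω m) y)
          ≤ γ ^ (wrep ω m).length * dist z y := h1
        _ ≤ γ ^ n * dist z y := by nlinarith
        _ < ε / 2 := hn
    have hdist' : dist z (applyWord φ (wrep ω m) y) < ε := by
      calc dist z (applyWord φ (wrep ω m) y)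
          ≤ dist z (applyWord φ (wrep ω m) z) +
            dist (applyWord φ (wrep ω m) z) (applyWord φ (wrep ω m) y) := dist_triangle _ _ _
        _ < ε / 2 + ε / 2 := add_lt_add hdz hcontr
        _ = ε := by ring
    have hsum : -δ ≤ sumWord φ (fun j _ => q j) (wrep ω m) y := by
      rw [sumWord_const, wrep_map_sum]
      have : -(δ / (m:ℝ)) * m < (ω.map q).sum * m := by
        exact mul_lt_mul_of_pos_right hσ hmpos
      have he : -(δ / (m:ℝ)) * m = -δ := by field_simp
      nlinarith
    unfold Seps
    refine le_trans ?_ (le_iSup₂ (wrep ω m) ⟨hne', hdist'⟩)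
    exact_mod_cast hsum
  exact le_antisymm upper lower
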